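/- For every n, m ≥ 1, the m-th L-duplicating matrix D_{n+1}^{(m)} ∈ ℝ^{(n+1)^{m+1}×(n(m+1)+1)}, defined by the recursion D_{n+1}^{(1)} := D_{n+1,n+1} and D_{n+1}^{(m)} := (I_{n+1} ⊗ D_{n+1}^{(m-1)})·D_{nm+1,n+1} for m ≥ 2, satisfies D_{n+1}^{(m)} · H_{n(m+1)}(x) = vec(X_n^{(m)}(x)) for every x ∈ ℝ. -/

import Mathlib

open Matrix MeasureTheory

namespace Correlators

lemma pos_left {a b k : ℕ} (h : k < a * b) : 0 < a := by
  rcases Nat.eq_zero_or_pos a with rfl | h'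
  · simp at h
  · exact h'

lemma pos_right {a b k : ℕ} (h : k < a * b) : 0 < b := by
  rcases Nat.eq_zero_or_pos b with rfl | h'
  · simp at h
  · exact h'

lemma div_lt_left {a c k : ℕ} (h : k < a * c) : k / c < a :=
  Nat.div_lt_of_lt_mul (by rwa [Nat.mul_comm] at h)

lemma unvec_idx {p q : ℕ} (i : Fin p) (j : Fin q) : j.1 * p + i.1 < p * q :=
  calc j.1 * p + i.1 < j.1 * p + p := Nat.add_lt_add_left i.2 _
    _ = (j.1 + 1) * p := by ring
    _ ≤ q * p := Nat.mul_le_mul_right p j.2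
    _ = p * q := Nat.mul_comm q p

/-- `H_N(x) = (1, x, x², …, x^N)ᵀ ∈ ℝ^{N+1}`, the monomial basis vector. -/
def Hmon (N : ℕ) (x : ℝ) : Fin (N + 1) → ℝ := fun i => x ^ (i : ℕ)

/-- Vectorization of a matrix: stacks the columns, `vec(A)_{n(j-1)+i} = A_{i,j}` (1-based). -/
def vec {n m : ℕ} (A : Matrix (Fin n) (Fin m) ℝ) : Fin (n * m) → ℝ :=
  fun k => A ⟨k.1 % n, Nat.mod_lt _ (pos_left k.2)⟩ ⟨k.1 / n, Nat.div_lt_of_lt_mul k.2⟩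

/-- Inverse vectorization: `unvec w` is the `p × q` matrix `B` with `B_{i,j} = w_{p(j-1)+i}`. -/
def unvec {p q : ℕ} (w : Fin (p * q) → ℝ) : Matrix (Fin p) (Fin q) ℝ :=
  Matrix.of fun i j => w ⟨j.1 * p + i.1, unvec_idx i j⟩

/-- L-vectorization: the first column of `A` followed by the last row of `A`. -/
def vecL {n m : ℕ} (A : Matrix (Fin n) (Fin m) ℝ) : Fin (n + m - 1) → ℝ :=
  fun k =>
    if h : k.1 < n then
      if hm : 0 < m then A ⟨k.1, h⟩ ⟨0, hm⟩ else 0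
    else
      if hn : 0 < n then
        A ⟨n - 1, Nat.sub_lt hn Nat.one_pos⟩ ⟨k.1 - n + 1, by have hk := k.2; omega⟩
      else 0

/-- A matrix is Hankel if its entries are constant along skew-diagonals. -/
def IsHankel {n m : ℕ} (A : Matrix (Fin n) (Fin m) ℝ) : Prop :=
  ∀ (i i' : Fin n) (j j' : Fin m), i.1 + j.1 = i'.1 + j'.1 → A i j = A i' j'

/-- Kronecker product of matrices, with flattened `Fin` indices:
`(A ⊗ B)_{(i-1)c+p,(j-1)d+q} = A_{i,j} B_{p,q}` (1-based). -/
def kron {a b c d : ℕ} (A : Matrix (Fin a) (Fin b) ℝ) (B : Matrix (Fin c) (Fin d) ℝ) :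
    Matrix (Fin (a * c)) (Fin (b * d)) ℝ :=
  Matrix.of fun i j =>
    A ⟨i.1 / c, div_lt_left i.2⟩ ⟨j.1 / d, div_lt_left j.2⟩ *
      B ⟨i.1 % c, Nat.mod_lt _ (pos_right i.2)⟩ ⟨j.1 % d, Nat.mod_lt _ (pos_right j.2)⟩

/-- Kronecker product of (column) vectors: `(u ⊗ v)_{(i-1)b+j} = u_i v_j` (1-based). -/
def vkron {a b : ℕ} (u : Fin a → ℝ) (v : Fin b → ℝ) : Fin (a * b) → ℝ :=
  fun k => u ⟨k.1 / b, div_lt_left k.2⟩ * v ⟨k.1 % b, Nat.mod_lt _ (pos_right k.2)⟩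

/-- Kronecker power of a vector: `u^{⊗0} = 1`, `u^{⊗(r+1)} = u^{⊗r} ⊗ u`. -/
def vkronPow {a : ℕ} (u : Fin a → ℝ) : (r : ℕ) → Fin (a ^ r) → ℝ
  | 0 => fun _ => 1
  | r + 1 => fun k => vkron (vkronPow u r) u (Fin.cast (pow_succ a r) k)

/-- A vector viewed as a one-row matrix (its transpose as a column vector). -/
def rowOf {N : ℕ} (u : Fin N → ℝ) : Matrix (Fin 1) (Fin N) ℝ := Matrix.of fun _ j => u j

/-- A vector viewed as a one-column matrix. -/
def colOf {N : ℕ} (u : Fin N → ℝ) : Matrix (Fin N) (Fin 1) ℝ := Matrix.of fun i _ => u i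

/-- Kronecker power of a matrix. -/
def mkronPow {a b : ℕ} (A : Matrix (Fin a) (Fin b) ℝ) :
    (r : ℕ) → Matrix (Fin (a ^ r)) (Fin (b ^ r)) ℝ
  | 0 => Matrix.of fun _ _ => (1 : ℝ)
  | r + 1 =>
      (kron (mkronPow A r) A).submatrix (Fin.cast (pow_succ a r)) (Fin.cast (pow_succ b r))

/-- `X_n^{(r)}(x) := H_n(x)ᵀ ⊗^r H_n(x) = (H_n(x)ᵀ)^{⊗r} ⊗ H_n(x)`,
a matrix in `ℝ^{(n+1) × (n+1)^r}`. -/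
def Xmat (n r : ℕ) (x : ℝ) : Matrix (Fin (n + 1)) (Fin ((n + 1) ^ r)) ℝ :=
  (kron (mkronPow (rowOf (Hmon n x)) r) (colOf (Hmon n x))).submatrix
    (Fin.cast (by simp)) (Fin.cast (by simp))

/-- The L-eliminating matrix
`E_{n,m} = ∑_{i=1}^n e_{n+m-1,i} ⊗ e_{m,1}ᵀ ⊗ e_{n,i}ᵀ + ∑_{i=2}^m e_{n+m-1,n+i-1} ⊗ e_{m,i}ᵀ ⊗ e_{n,n}ᵀ`,
written entrywise: the `i`-th summand of the first sum is the matrix with a single `1` in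
(1-based) position `(i, i)`, and the `i`-th summand of the second sum has its single `1` in
position `(n+i-1, n·i)`. -/
def Emat (n m : ℕ) : Matrix (Fin (n + m - 1)) (Fin (n * m)) ℝ :=
  Matrix.of fun r c =>
    (∑ i ∈ Finset.range n, if r.1 = i ∧ c.1 = i then (1 : ℝ) else 0) +
    (∑ i ∈ Finset.Icc 2 m, if r.1 = n + i - 2 ∧ c.1 + 1 = n * i then (1 : ℝ) else 0)

/-- The L-duplicating matrix `D_{n,m} = ∑_{i=1}^n ∑_{j=1}^m e_{n+m-1,i+j-1}ᵀ ⊗ e_{m,j} ⊗ e_{n,i}`,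
written entrywise: the `(i,j)` summand is the matrix with a single `1` in (1-based) position
`(n(j-1)+i, i+j-1)`. -/
def Dmat (n m : ℕ) : Matrix (Fin (n * m)) (Fin (n + m - 1)) ℝ :=
  Matrix.of fun r c =>
    ∑ i ∈ Finset.range n, ∑ j ∈ Finset.range m,
      if r.1 = n * j + i ∧ c.1 = i + j then (1 : ℝ) else 0

lemma arA (n : ℕ) : n * (0 + 2) + 1 = (n + 1) + (n + 1) - 1 := by omega

lemma arB (n : ℕ) : (n + 1) ^ (0 + 2) = (n + 1) * (n + 1) := by ring

lemma arC (n k : ℕ) : (n * (k + 2) + 1) * (n + 1) = (n + 1) * (n * (k + 2) + 1) :=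
  Nat.mul_comm _ _

lemma arD (n k : ℕ) : n * (k + 1 + 2) + 1 = n * (k + 2) + 1 + (n + 1) - 1 := by
  rw [Nat.add_sub_assoc (Nat.le_add_left 1 n), Nat.add_sub_cancel]
  ring

lemma arE (n k : ℕ) : (n + 1) ^ (k + 1 + 2) = (n + 1) * (n + 1) ^ (k + 2) := by ring

/-- The iterated L-eliminating matrices `E_{n+1}^{(m)}` (here indexed by `k := m - 1`):
`E_{n+1}^{(1)} = E_{n+1,n+1}` and `E_{n+1}^{(m)} = E_{nm+1,n+1} · (I_{n+1} ⊗ E_{n+1}^{(m-1)})`. -/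
def EL (n : ℕ) : (k : ℕ) → Matrix (Fin (n * (k + 2) + 1)) (Fin ((n + 1) ^ (k + 2))) ℝ
  | 0 => (Emat (n + 1) (n + 1)).submatrix (Fin.cast (arA n)) (Fin.cast (arB n))
  | k + 1 =>
      (Emat (n * (k + 2) + 1) (n + 1) *
        (kron (1 : Matrix (Fin (n + 1)) (Fin (n + 1)) ℝ) (EL n k)).submatrix
          (Fin.cast (arC n k)) id).submatrix
        (Fin.cast (arD n k)) (Fin.cast (arE n k))

/-- The iterated L-duplicating matrices `D_{n+1}^{(m)}` (here indexed by `k := m - 1`):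
`D_{n+1}^{(1)} = D_{n+1,n+1}` and `D_{n+1}^{(m)} = (I_{n+1} ⊗ D_{n+1}^{(m-1)}) · D_{nm+1,n+1}`. -/
def DL (n : ℕ) : (k : ℕ) → Matrix (Fin ((n + 1) ^ (k + 2))) (Fin (n * (k + 2) + 1)) ℝ
  | 0 => (Dmat (n + 1) (n + 1)).submatrix (Fin.cast (arB n)) (Fin.cast (arA n))
  | k + 1 =>
      ((kron (1 : Matrix (Fin (n + 1)) (Fin (n + 1)) ℝ) (DL n k)).submatrix
          id (Fin.cast (arC n k)) * Dmat (n * (k + 2) + 1) (n + 1)).submatrix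
        (Fin.cast (arE n k)) (Fin.cast (arD n k))

/-- The exponent `γ_{n,r}^{(k)} = ∑_{j=0}^{r-1} ((k-1) mod (n+1)^{r-j}) div (n+1)^{r-1-j}`
(`k` is 1-based). -/
def gamExp (n r k : ℕ) : ℕ :=
  ∑ j ∈ Finset.range r, ((k - 1) % (n + 1) ^ (r - j)) / (n + 1) ^ (r - 1 - j)

/-- Entry `(p, q)` (0-based) of the generator matrix of a polynomial jump-diffusion with
drift `b₀ + b₁ x`, squared diffusion `σ₀ + σ₁ x + σ₂ x²`, and jump moments
`∫ z^m ℓ(x,dz) = ∑_{i=0}^m ξ_i^m x^i` (`ξ m i` denotes `ξ_i^m`), with respect to the monomial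
basis. -/
noncomputable def genEntry (b₀ b₁ σ₀ σ₁ σ₂ : ℝ) (ξ : ℕ → ℕ → ℝ) (p q : ℕ) : ℝ :=
  if q = p then
    (p : ℝ) * b₁ + (1 / 2) * (p : ℝ) * ((p : ℝ) - 1) * σ₂ +
      ∑ k ∈ Finset.Icc 2 p, (p.choose k : ℝ) * ξ k k
  else if q + 1 = p then
    (p : ℝ) * b₀ + (1 / 2) * (p : ℝ) * ((p : ℝ) - 1) * σ₁ +
      ∑ k ∈ Finset.Icc 2 p, (p.choose k : ℝ) * ξ k (k - 1)
  else if q + 2 = p then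
    (1 / 2) * (p : ℝ) * ((p : ℝ) - 1) * σ₀ +
      ∑ k ∈ Finset.Icc 2 p, (p.choose k : ℝ) * ξ k (k - 2)
  else if q + 2 < p then
    ∑ k ∈ Finset.Icc (p - q) p, (p.choose k : ℝ) * ξ k (k - (p - q))
  else 0

/-- The generator matrix `G_n` of a polynomial jump-diffusion w.r.t. the monomial basis. -/
noncomputable def genMat (b₀ b₁ σ₀ σ₁ σ₂ : ℝ) (ξ : ℕ → ℕ → ℝ) (n : ℕ) :
    Matrix (Fin (n + 1)) (Fin (n + 1)) ℝ :=
  Matrix.of fun p q => genEntry b₀ b₁ σ₀ σ₁ σ₂ ξ p.1 q.1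


lemma block_idx {n r k : ℕ} (hr : 1 ≤ r) (hk1 : 1 ≤ k) (hk2 : k ≤ (n + 1) ^ (r - 1))
    (c : Fin (n + 1)) : (k - 1) * (n + 1) + c.1 < (n + 1) ^ r := by
  have hc := c.2
  have h1 : (k - 1 + 1) * (n + 1) ≤ (n + 1) ^ (r - 1) * (n + 1) :=
    Nat.mul_le_mul_right (n + 1) (by omega)
  have h2 : (n + 1) ^ (r - 1) * (n + 1) = (n + 1) ^ r := by
    rw [← pow_succ]
    congr 1
    omega
  have h3 : (k - 1) * (n + 1) + c.1 < (k - 1 + 1) * (n + 1) := by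
    rw [Nat.add_mul]
    omega
  omega

def dsum (b r j : ℕ) : ℕ := ∑ t ∈ Finset.range r, j / b ^ t % b

lemma dsum_succ_low (b r j : ℕ) : dsum b (r+1) j = dsum b r (j / b) + j % b := by
  rw [dsum, Finset.sum_range_succ']
  congr 1
  · exact Finset.sum_congr rfl fun t _ => by
      rw [Nat.div_div_eq_div_mul, ← pow_succ']
  · simp

lemma dsum_succ_high (b r j : ℕ) (hb : 0 < b) (hj : j < b ^ (r+1)) :
    dsum b (r+1) j = j / b ^ r + dsum b r (j % b ^ r) := by
  rw [dsum, Finset.sum_range_succ]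
  have h1 : j / b ^ r % b = j / b ^ r :=
    Nat.mod_eq_of_lt (Nat.div_lt_of_lt_mul (by rwa [pow_succ] at hj))
  have h2 : ∀ t ∈ Finset.range r, j / b ^ t % b = (j % b ^ r) / b ^ t % b := by
    intro t ht
    rw [Finset.mem_range] at ht
    have hq := Nat.div_add_mod j (b ^ r)
    have h3 : j / b ^ t = b ^ (r - t) * (j / b ^ r) + (j % b ^ r) / b ^ t := by
      conv_lhs => rw [← hq]
      rw [show b ^ r * (j / b ^ r) = b ^ t * (b ^ (r - t) * (j / b ^ r)) by
        rw [← Nat.mul_assoc, ← pow_add]; congr 2; omega]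
      rw [Nat.mul_add_div (pow_pos hb t)]
    rw [h3, show b ^ (r - t) * (j / b ^ r) = b * (b ^ (r - t - 1) * (j / b ^ r)) by
      rw [← Nat.mul_assoc, ← pow_succ']; congr 2; omega, Nat.mul_add_mod]
  rw [h1, Finset.sum_congr rfl h2, dsum]
  omega

lemma decomp_unique {N i j r : ℕ} (hN : 0 < N) (hi : i < N) (h : r = N * j + i) :
    i = r % N ∧ j = r / N := by
  subst h
  constructor
  · rw [Nat.mul_add_mod, Nat.mod_eq_of_lt hi]
  · rw [Nat.mul_add_div hN, Nat.div_eq_of_lt hi, Nat.add_zero]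

lemma Dmat_apply (N M : ℕ) (r : Fin (N * M)) (c : Fin (N + M - 1)) :
    Dmat N M r c = if c.1 = r.1 % N + r.1 / N then 1 else 0 := by
  have hN : 0 < N := pos_left r.2
  have hM : 0 < M := pos_right r.2
  have hmod : r.1 % N < N := Nat.mod_lt _ hN
  have hdiv : r.1 / N < M := Nat.div_lt_of_lt_mul r.2
  have key : ∀ i ∈ Finset.range N, ∀ j ∈ Finset.range M,
      (if r.1 = N * j + i ∧ c.1 = i + j then (1:ℝ) else 0)
      = if i = r.1 % N then (if j = r.1 / N then
          (if c.1 = r.1 % N + r.1 / N then (1:ℝ) else 0) else 0) else 0 := by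
    intro i hi j hj
    by_cases h1 : r.1 = N * j + i
    · obtain ⟨e1, e2⟩ := decomp_unique hN (Finset.mem_range.mp hi) h1
      subst e1; subst e2
      rw [if_congr (and_iff_right h1) rfl rfl, if_pos rfl, if_pos rfl]
    · rw [if_neg (fun hc => h1 hc.1)]
      by_cases e1 : i = r.1 % N
      · by_cases e2 : j = r.1 / N
        · exfalso; apply h1; subst e1; subst e2
          exact (Nat.div_add_mod r.1 N).symm
        · rw [if_pos e1, if_neg e2]
      · rw [if_neg e1]
  unfold Dmat
  rw [Matrix.of_apply,
    Finset.sum_congr rfl (fun i hi => Finset.sum_congr rfl (fun j hj => key i hi j hj))]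
  simp only [Finset.sum_ite_irrel, Finset.sum_const, smul_zero, Finset.sum_ite_eq',
    Finset.mem_range]
  rw [if_pos hdiv, if_pos hmod]

lemma LIdx {N M : ℕ} (r : Fin (N * M)) : r.1 % N + r.1 / N < N + M - 1 := by
  have hN := pos_left r.2
  have hM := pos_right r.2
  have h1 : r.1 % N < N := Nat.mod_lt _ hN
  have h2 : r.1 / N < M := Nat.div_lt_of_lt_mul r.2
  omega

lemma Dmat_mulVec (N M : ℕ) (w : Fin (N + M - 1) → ℝ) (r : Fin (N * M)) :
    (Dmat N M *ᵥ w) r = w ⟨r.1 % N + r.1 / N, LIdx r⟩ := by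
  have : ∀ c : Fin (N + M - 1), Dmat N M r c * w c
      = if c = ⟨r.1 % N + r.1 / N, LIdx r⟩ then w c else 0 := by
    intro c
    rw [Dmat_apply]
    by_cases h : c.1 = r.1 % N + r.1 / N
    · rw [if_pos h, if_pos (Fin.ext h), one_mul]
    · rw [if_neg h, if_neg (fun hc => h (congrArg Fin.val hc)), zero_mul]
  show ∑ c, Dmat N M r c * w c = _
  rw [Finset.sum_congr rfl fun c _ => this c, Finset.sum_ite_eq' Finset.univ]
  simp

lemma mkronPow_row (n : ℕ) (x : ℝ) : ∀ (r : ℕ) (i : Fin (1 ^ r)) (j : Fin ((n+1) ^ r)),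
    mkronPow (rowOf (Hmon n x)) r i j = x ^ dsum (n+1) r j.1
  | 0, i, j => by simp [mkronPow, dsum]; rfl
  | r+1, i, j => by
    show (kron (mkronPow (rowOf (Hmon n x)) r) (rowOf (Hmon n x)))
        (Fin.cast (pow_succ 1 r) i) (Fin.cast (pow_succ (n+1) r) j) = _
    rw [kron, Matrix.of_apply, mkronPow_row n x r, rowOf, Matrix.of_apply]
    simp only [Fin.coe_cast, Hmon]
    rw [← pow_add, dsum_succ_low]

lemma vec_Xmat (n m : ℕ) (x : ℝ) (l : Fin ((n+1) * (n+1) ^ m)) :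
    vec (Xmat n m x) l = x ^ dsum (n+1) (m+1) l.1 := by
  unfold vec Xmat
  rw [Matrix.submatrix_apply, kron, Matrix.of_apply, mkronPow_row n x m, colOf,
    Matrix.of_apply]
  simp only [Fin.coe_cast, Hmon, Nat.div_one]
  rw [← pow_add, dsum_succ_low]
  congr 1
  have h1 : l.1 % (n+1) % (n+1) = l.1 % (n+1) := Nat.mod_mod_of_dvd _ dvd_rfl
  omega

lemma sum_fin_mul {q N : ℕ} (f : Fin (q * N) → ℝ) :
    ∑ c, f c = ∑ a : Fin q, ∑ b : Fin N, f (finProdFinEquiv (a, b)) := by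
  rw [← Equiv.sum_comp finProdFinEquiv f, Fintype.sum_prod_type]

lemma kron_one_apply {q P N : ℕ} (D : Matrix (Fin P) (Fin N) ℝ)
    (i : Fin (q * P)) (c : Fin (q * N)) :
    kron (1 : Matrix (Fin q) (Fin q) ℝ) D i c
      = if i.1 / P = c.1 / N then
          D ⟨i.1 % P, Nat.mod_lt _ (pos_right i.2)⟩ ⟨c.1 % N, Nat.mod_lt _ (pos_right c.2)⟩
        else 0 := by
  rw [kron, Matrix.of_apply, Matrix.one_apply]
  by_cases h : i.1 / P = c.1 / N
  · rw [if_pos (Fin.ext h), if_pos h, one_mul]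
  · rw [if_neg (fun hc => h (congrArg Fin.val hc)), if_neg h, zero_mul]

lemma DL_mulVec (n : ℕ) (x : ℝ) : ∀ (k : ℕ) (j : Fin ((n+1) ^ (k+2))),
    (DL n k *ᵥ fun i : Fin (n*(k+2)+1) => x ^ i.1) j = x ^ dsum (n+1) (k+2) j.1
  | 0, j => by
    show ((Dmat (n+1) (n+1)).submatrix (⇑(finCongr (arB n))) (⇑(finCongr (arA n))) *ᵥ
      fun i => x ^ i.1) j = _
    rw [Matrix.submatrix_mulVec_equiv, Function.comp_apply, Dmat_mulVec]
    simp only [Function.comp_apply, finCongr_symm, finCongr_apply_coe]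
    congr 1
    have h2 : j.1 < (n+1) * (n+1) := lt_of_lt_of_eq j.2 (by ring)
    have h3 : j.1 / (n+1) < n+1 := Nat.div_lt_of_lt_mul h2
    simp [dsum, Finset.sum_range_succ, Nat.mod_eq_of_lt h3]
  | k+1, j => by
    have hb : 0 < n + 1 := Nat.succ_pos n
    have hN : 0 < n * (k+2) + 1 := Nat.succ_pos _
    have hP : 0 < (n+1) ^ (k+2) := pow_pos hb _
    have hjlt : j.1 < (n+1) * (n+1) ^ (k+2) := lt_of_lt_of_eq j.2 (arE n k)
    have hdivP : j.1 / (n+1) ^ (k+2) < n + 1 := div_lt_left hjlt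
    have hmodP : j.1 % (n+1) ^ (k+2) < (n+1) ^ (k+2) := Nat.mod_lt _ hP
    set N := n * (k+2) + 1 with hNdef
    set P := (n+1) ^ (k+2) with hPdef
    show (((kron (1 : Matrix (Fin (n + 1)) (Fin (n + 1)) ℝ) (DL n k)).submatrix
          id (⇑(finCongr (arC n k))) * Dmat N (n + 1)).submatrix
        (Fin.cast (arE n k)) (⇑(finCongr (arD n k))) *ᵥ fun i => x ^ i.1) j = _
    rw [Matrix.submatrix_mulVec_equiv, Function.comp_apply, ← Matrix.mulVec_mulVec]
    have hv : ((fun i : Fin (n*(k+1+2)+1) => x ^ i.1) ∘ ⇑(finCongr (arD n k)).symm)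
        = fun i : Fin (N + (n+1) - 1) => x ^ i.1 := by
      funext i; simp
    rw [hv, Matrix.submatrix_mulVec_equiv, Function.comp_apply, id_eq]
    set u := ((Dmat N (n+1) *ᵥ fun i : Fin (N + (n+1) - 1) => x ^ i.1) ∘
      ⇑(finCongr (arC n k)).symm) with hudef
    have hu : u = fun c : Fin ((n+1) * N) => x ^ (c.1 % N + c.1 / N) := by
      funext c
      rw [hudef, Function.comp_apply, Dmat_mulVec]
      rfl
    set jdiv : Fin (n+1) := ⟨j.1 / P, hdivP⟩ with hjdiv
    set jmod : Fin P := ⟨j.1 % P, hmodP⟩ with hjmod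
    show ∑ c, kron 1 (DL n k) (Fin.cast (arE n k) j) c * u c = _
    rw [sum_fin_mul]
    have key : ∀ (a : Fin (n+1)) (b : Fin N),
        kron 1 (DL n k) (Fin.cast (arE n k) j) (finProdFinEquiv (a, b)) *
          u (finProdFinEquiv (a, b))
        = if a = jdiv then DL n k jmod b * x ^ (b.1 + j.1 / P) else 0 := by
      intro a b
      simp only [hu]
      rw [kron_one_apply]
      have hdiv : (finProdFinEquiv (a, b) : Fin ((n+1) * N)).1 / N = a.1 := by
        rw [show (finProdFinEquiv (a, b) : Fin ((n+1) * N)).1 = b.1 + N * a.1 from rfl,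
          Nat.add_mul_div_left _ _ hN, Nat.div_eq_of_lt b.2, Nat.zero_add]
      have hmod : (finProdFinEquiv (a, b) : Fin ((n+1) * N)).1 % N = b.1 := by
        rw [show (finProdFinEquiv (a, b) : Fin ((n+1) * N)).1 = b.1 + N * a.1 from rfl,
          Nat.add_mul_mod_self_left, Nat.mod_eq_of_lt b.2]
      have hcond : ((Fin.cast (arE n k) j).1 / P
          = (finProdFinEquiv (a, b) : Fin ((n+1) * N)).1 / N) ↔ a = jdiv := by
        rw [hdiv, show ((Fin.cast (arE n k) j).1 : ℕ) = j.1 from rfl]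
        constructor
        · intro h; exact Fin.ext h.symm
        · intro h; rw [h]
      rw [if_congr hcond rfl rfl]
      have e1 : (⟨(Fin.cast (arE n k) j).1 % P,
          Nat.mod_lt _ (pos_right (Fin.cast (arE n k) j).2)⟩ : Fin P) = jmod := Fin.ext rfl
      have e2 : (⟨(finProdFinEquiv (a, b) : Fin ((n+1) * N)).1 % N,
          Nat.mod_lt _ (pos_right (finProdFinEquiv (a, b) : Fin ((n+1) * N)).2)⟩ : Fin N) = b :=
        Fin.ext hmod
      by_cases h : a = jdiv
      · have hval : a.1 = j.1 / P := by rw [h]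
        rw [if_pos h, if_pos h, e1, e2, hmod, hdiv, hval]
      · rw [if_neg h, if_neg h, zero_mul]
    rw [Finset.sum_congr rfl fun a _ => Finset.sum_congr rfl fun b _ => key a b]
    simp only [Finset.sum_ite_irrel, Finset.sum_const_zero, Finset.sum_ite_eq',
      Finset.mem_univ, if_true]
    have hstep : ∀ b : Fin N, DL n k jmod b * x ^ (b.1 + j.1 / P)
        = DL n k jmod b * x ^ b.1 * x ^ (j.1 / P) := by
      intro b; rw [pow_add, mul_assoc]
    rw [Finset.sum_congr rfl fun b _ => hstep b, ← Finset.sum_mul]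
    have hIH : (∑ b : Fin N, DL n k jmod b * x ^ b.1) = x ^ dsum (n+1) (k+2) (j.1 % P) :=
      DL_mulVec n x k jmod
    rw [hIH, ← pow_add]
    congr 1
    have hlt : j.1 < (n+1) ^ (k+2+1) :=
      lt_of_lt_of_eq hjlt ((Nat.mul_comm _ _).trans (pow_succ _ _).symm)
    have hh : dsum (n+1) (k+1+2) j.1 = j.1 / P + dsum (n+1) (k+2) (j.1 % P) :=
      dsum_succ_high (n+1) (k+2) j.1 hb hlt
    rw [hh]
    omega

/-- For every `n, m ≥ 1`, the `m`-th L-duplicating matrix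
`D_{n+1}^{(m)} ∈ ℝ^{(n+1)^{m+1}×(n(m+1)+1)}`, defined by `D_{n+1}^{(1)} = D_{n+1,n+1}` and
`D_{n+1}^{(m)} = (I_{n+1} ⊗ D_{n+1}^{(m-1)})·D_{nm+1,n+1}` for `m ≥ 2`, satisfies
`D_{n+1}^{(m)} · H_{n(m+1)}(x) = vec(X_n^{(m)}(x))` for every `x ∈ ℝ`. -/
theorem stmt11 (n m : ℕ) (hn : 1 ≤ n) (hm : 1 ≤ m) (x : ℝ) :
    (DL n (m - 1) *ᵥ
        fun i : Fin (n * (m - 1 + 2) + 1) =>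
          Hmon (n * (m + 1)) x
            (Fin.cast (by rw [show m - 1 + 2 = m + 1 from by omega]) i))
      = fun j : Fin ((n + 1) ^ (m - 1 + 2)) =>
          vec (Xmat n m x)
            (Fin.cast (by rw [show m - 1 + 2 = m + 1 from by omega]; ring) j) := by
  obtain ⟨k, rfl⟩ : ∃ k, m = k + 1 := ⟨m - 1, by omega⟩
  funext j
  exact (DL_mulVec n x k j).trans
    (vec_Xmat n (k + 1) x
      (Fin.cast (show (n+1) ^ (k+1-1+2) = (n+1) * (n+1) ^ (k+1) by
        rw [show k+1-1+2 = k+2 from rfl]; ring) j)).symm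

end Correlators
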